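/- Let q be an odd prime power, K a finite field with q² elements, F its subfield of order q, and θ ∈ K \ {0} with θ^{q+1} a nonsquare in F. Then for all a, b ∈ K the number of x ∈ K with (x+a)² − b ∈ θF equals 1 if b ∈ θF and equals q+1 if b ∉ θF; hence U_θ = {(x, tθ) : x ∈ K, t ∈ F} ∪ {(∞)} is a unital in the Desarguesian shift plane Π(f) for f(x) = x². -/

import Mathlib

/-- The point set of the shift plane `Π(f)`: affine points `(x,y)`, points at
infinity `(a)` for `a ∈ K`, and the point `(∞)`. -/
abbrev ShiftPt (K : Type) : Type := (K × K) ⊕ (K ⊕ Unit)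

/-- The affine line `L_{a,b} = {(x, f(x+a) − b) : x ∈ K} ∪ {(a)}` of the shift plane. -/
def affLine (K : Type) [Field K] (f : K → K) (a b : K) : Set (ShiftPt K) :=
  {P | (∃ x : K, P = Sum.inl (x, f (x + a) - b)) ∨ P = Sum.inr (Sum.inl a)}

/-- The vertical line `N_a = {(a,y) : y ∈ K} ∪ {(∞)}` of the shift plane. -/
def vertLine (K : Type) [Field K] (a : K) : Set (ShiftPt K) :=
  {P | (∃ y : K, P = Sum.inl (a, y)) ∨ P = Sum.inr (Sum.inr ())}

/-- The line at infinity of the shift plane. -/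
def lineAtInf (K : Type) : Set (ShiftPt K) :=
  {P | ∃ s : K ⊕ Unit, P = Sum.inr s}

/-- The set of all lines of the shift plane `Π(f)`. -/
def shiftLines (K : Type) [Field K] (f : K → K) : Set (Set (ShiftPt K)) :=
  {L | (∃ a b : K, L = affLine K f a b) ∨ (∃ a : K, L = vertLine K a) ∨ L = lineAtInf K}

/-- The set `θF = {tθ : t ∈ F}`, where `F = {t : t^q = t}` is the subfield of order `q`. -/
def scalarSet (K : Type) [Field K] (q : ℕ) (θ : K) : Set K :=
  {c | ∃ t : K, t ^ q = t ∧ c = t * θ}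

/-- The point set `U_θ = {(x, tθ) : x ∈ K, t ∈ F} ∪ {(∞)}`. -/
def unitalSet (K : Type) [Field K] (q : ℕ) (θ : K) : Set (ShiftPt K) :=
  {P | (∃ x t : K, t ^ q = t ∧ P = Sum.inl (x, t * θ)) ∨ P = Sum.inr (Sum.inr ())}

/-!
Write `σ x = x ^ q` and choose `α` with `α ^ 2 = θ ^ (q + 1) = θ σθ`; as `θ ^ (q + 1)` is not a
square in `F`, `σ α = -α`. Now `y ^ 2 - b ∈ θF` iff `σθ (y ^ 2 - b) = θ σ(y ^ 2 - b)`, and for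
`w = α y + θ σy` a direct computation gives `w ^ (q + 1) = α (σθ y ^ 2 - θ σ(y ^ 2))`. Since
`y ↦ α y + θ σy` is a bijection of `K` (applied twice it is multiplication by `2 α ^ 2`), the
count is the number of `w` with `w ^ (q + 1) = α (σθ b - θ σb)`. The right side lies in `F` and
vanishes iff `b ∈ θF`; the norm `w ↦ w ^ (q + 1)` has `q + 1` preimages over every nonzero
element of `F`, and only `0` over `0`.
-/

open Finset

section NormMap

variable {K : Type*} [Field K] [Fintype K] {q : ℕ}

lemma card_filter_pow_eq_le [DecidableEq K] {n : ℕ} (hn : 0 < n) (c : K) :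
    #{w | w ^ n = c} ≤ n :=
  calc #{w | w ^ n = c} = #(Polynomial.nthRoots n c).toFinset := by
        congr 1; ext w; simp [Polynomial.mem_nthRoots hn]
    _ ≤ Multiset.card (Polynomial.nthRoots n c) := Multiset.toFinset_card_le _
    _ ≤ n := Polynomial.card_nthRoots n c

lemma pow_pow_eq_self_of_card (hK : Fintype.card K = q ^ 2) (x : K) : (x ^ q) ^ q = x := by
  rw [← pow_mul, ← sq, ← hK, FiniteField.pow_card]

lemma pow_succ_pow_eq_self (hK : Fintype.card K = q ^ 2) (w : K) :
    (w ^ (q + 1)) ^ q = w ^ (q + 1) := by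
  rw [pow_succ, mul_pow, pow_pow_eq_self_of_card hK, mul_comm]

lemma one_lt_of_card_eq_sq (hK : Fintype.card K = q ^ 2) : 1 < q := by
  have := hK ▸ (Fintype.one_lt_card : 1 < Fintype.card K)
  by_contra! h
  interval_cases q <;> simp_all

/-- `w ↦ w ^ (q + 1)` sends the `q ^ 2 - 1` units of `K` into `{c | c ^ q = c, c ≠ 0}`, which
has at most `q - 1` elements, with fibres of size at most `q + 1`: all these bounds are sharp. -/
lemma card_fixed_and_card_norm_fiber [DecidableEq K] (hK : Fintype.card K = q ^ 2) :
    #({c | c ^ q = c} : Finset K) = q ∧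
      ∀ c : K, c ^ q = c → c ≠ 0 → #{w | w ^ (q + 1) = c} = q + 1 := by
  have hq := one_lt_of_card_eq_sq hK
  set F : Finset K := {c | c ^ q = c}
  set s : Finset K := univ.erase 0
  set t : Finset K := F.erase 0
  have mem_t {c : K} : c ∈ t ↔ c ≠ 0 ∧ c ^ q = c := by simp [t, F]
  have hst : ∀ w ∈ s, w ^ (q + 1) ∈ t := fun w hw =>
    mem_t.2 ⟨pow_ne_zero _ (mem_erase.1 hw).1, pow_succ_pow_eq_self hK w⟩
  have hfibre : ∀ c ∈ t, #{w ∈ s | w ^ (q + 1) = c} = #{w | w ^ (q + 1) = c} := by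
    intro c hc
    congr 1
    ext w
    simp only [s, mem_filter, mem_erase, mem_univ, true_and, and_true, and_iff_right_iff_imp]
    rintro rfl rfl
    exact (mem_t.1 hc).1 (zero_pow q.succ_ne_zero)
  have hfibre_le : ∀ c ∈ t, #{w ∈ s | w ^ (q + 1) = c} ≤ q + 1 := fun c hc =>
    hfibre c hc ▸ card_filter_pow_eq_le q.succ_pos c
  have ht_le : #t ≤ q - 1 := by
    refine (card_le_card fun c hc => ?_).trans (card_filter_pow_eq_le (by omega) (1 : K))
    obtain ⟨hc0, hcq⟩ := mem_t.1 hc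
    rw [mem_filter]
    refine ⟨mem_univ c, mul_right_cancel₀ hc0 ?_⟩
    rw [pow_sub_one_mul (by omega), hcq, one_mul]
  have hs : #s = (q + 1) * (q - 1) := by
    rw [card_erase_of_mem (mem_univ 0), card_univ, hK]
    simpa using Nat.sq_sub_sq q 1
  have ht : #t = q - 1 :=
    le_antisymm ht_le (Nat.le_of_mul_le_mul_left
      (hs ▸ card_le_mul_card_image_of_maps_to hst (q + 1) hfibre_le) q.succ_pos)
  refine ⟨?_, fun c hcq hc0 => ?_⟩
  · rw [← card_erase_add_one (show (0 : K) ∈ F by simp [F, zero_pow (by omega : q ≠ 0)])]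
    change #t + 1 = q
    omega
  · have hsum : ∑ c ∈ t, #{w ∈ s | w ^ (q + 1) = c} = ∑ _c ∈ t, (q + 1) := by
      rw [← card_eq_sum_card_fiberwise hst, sum_const, ht, hs, smul_eq_mul, mul_comm]
    have hc : c ∈ t := mem_t.2 ⟨hc0, hcq⟩
    rw [← hfibre c hc]
    exact (sum_eq_sum_iff_of_le hfibre_le).1 hsum c hc

lemma ncard_pow_eq_self (hK : Fintype.card K = q ^ 2) : {c : K | c ^ q = c}.ncard = q := by
  classical
  rw [Set.ncard_eq_toFinset_card', Set.toFinset_ofPred]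
  exact (card_fixed_and_card_norm_fiber hK).1

lemma ncard_pow_succ_eq (hK : Fintype.card K = q ^ 2) {c : K} (hcq : c ^ q = c) (hc0 : c ≠ 0) :
    {w : K | w ^ (q + 1) = c}.ncard = q + 1 := by
  classical
  rw [Set.ncard_eq_toFinset_card', Set.toFinset_ofPred]
  exact (card_fixed_and_card_norm_fiber hK).2 c hcq hc0

lemma isSquare_of_pow_eq_self (hK : Fintype.card K = q ^ 2) (hq : Odd q) {c : K}
    (hcq : c ^ q = c) : IsSquare c := by
  rcases eq_or_ne c 0 with rfl | hc0
  · exact IsSquare.zero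
  obtain ⟨w, hw⟩ : ∃ w : K, w ^ (q + 1) = c := Set.nonempty_of_ncard_ne_zero
    (s := {w : K | w ^ (q + 1) = c}) (by rw [ncard_pow_succ_eq hK hcq hc0]; omega)
  obtain ⟨k, hk⟩ := hq.add_one
  exact ⟨w ^ k, by rw [← hw, hk, pow_add]⟩

end NormMap

section Twist

variable {R : Type*} [CommRing R] (σ : R →+* R) (α θ : R)

def twist (y : R) : R := α * y + θ * σ y

variable {σ α θ}

lemma twist_twist (hσ : ∀ x, σ (σ x) = x) (hα : σ α = -α) (hαθ : α ^ 2 = θ * σ θ) (y : R) :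
    twist σ α θ (twist σ α θ y) = 2 * α ^ 2 * y := by
  simp only [twist, map_add, map_mul, hσ, hα]
  linear_combination (-y) * hαθ

lemma map_twist_mul_twist (hσ : ∀ x, σ (σ x) = x) (hα : σ α = -α) (hαθ : α ^ 2 = θ * σ θ)
    (y : R) :
    σ (twist σ α θ y) * twist σ α θ y = α * (σ θ * y ^ 2 - θ * σ (y ^ 2)) := by
  simp only [twist, map_add, map_mul, map_pow, hσ, hα]
  linear_combination (-(y * σ y)) * hαθ

end Twist

section Frobenius

variable {K : Type} [Field K] {q : ℕ} {σ : K →+* K} {θ : K}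

lemma mem_scalarSet_iff (hσ : ∀ x, σ x = x ^ q) (hθ : θ ≠ 0) {z : K} :
    z ∈ scalarSet K q θ ↔ σ θ * z = θ * σ z := by
  constructor
  · rintro ⟨t, ht, rfl⟩
    rw [map_mul, hσ t, ht]
    ring
  · intro h
    refine ⟨z / θ, ?_, (div_mul_cancel₀ z hθ).symm⟩
    rw [← hσ, map_div₀, div_eq_div_iff ((map_ne_zero σ).2 hθ) hθ]
    linear_combination -h

variable [Fintype K]

lemma map_map_eq_self (hK : Fintype.card K = q ^ 2) (hσ : ∀ x, σ x = x ^ q) (x : K) :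
    σ (σ x) = x := by
  rw [hσ, hσ, pow_pow_eq_self_of_card hK]

lemma exists_map_eq_neg_and_sq_eq (hK : Fintype.card K = q ^ 2) (hq : Odd q)
    (hσ : ∀ x, σ x = x ^ q) (hns : ¬ ∃ s : K, s ^ q = s ∧ s ^ 2 = θ ^ (q + 1)) :
    ∃ α : K, σ α = -α ∧ α ^ 2 = θ * σ θ := by
  have hσσ := map_map_eq_self hK hσ
  have hnorm : θ ^ (q + 1) = θ * σ θ := by rw [hσ, pow_succ, mul_comm]
  obtain ⟨α, hα⟩ := isSquare_of_pow_eq_self hK hq (c := θ * σ θ)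
    (by rw [← hσ, map_mul, hσσ, mul_comm])
  refine ⟨α, ?_, by rw [sq, hα]⟩
  have hσα : σ α * σ α = α * α := by rw [← map_mul, ← hα, map_mul, hσσ, mul_comm]
  refine (mul_self_eq_mul_self_iff.1 hσα).resolve_left fun h => hns ⟨α, ?_, ?_⟩
  · rw [← hσ, h]
  · rw [hnorm, sq, hα]

lemma ncard_shift_sq_sub_mem_scalarSet_eq (hK : Fintype.card K = q ^ 2) (hσ : ∀ x, σ x = x ^ q)
    (hθ : θ ≠ 0) (h2 : (2 : K) ≠ 0) {α : K} (hα0 : α ≠ 0) (hα : σ α = -α)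
    (hαθ : α ^ 2 = θ * σ θ) (a b : K) :
    {x : K | (x + a) ^ 2 - b ∈ scalarSet K q θ}.ncard =
      {w : K | w ^ (q + 1) = α * (σ θ * b - θ * σ b)}.ncard := by
  have hσσ := map_map_eq_self hK hσ
  have hinj : Function.Injective (twist σ α θ) := fun y y' h => by
    have := congrArg (twist σ α θ) h
    rwa [twist_twist hσσ hα hαθ, twist_twist hσσ hα hαθ,
      mul_right_inj' (mul_ne_zero h2 (pow_ne_zero 2 hα0))] at this
  have hinj' : Function.Injective fun x => twist σ α θ (x + a) :=
    hinj.comp (add_left_injective a)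
  have hset : {x : K | (x + a) ^ 2 - b ∈ scalarSet K q θ} =
      (fun x => twist σ α θ (x + a)) ⁻¹' {w : K | w ^ (q + 1) = α * (σ θ * b - θ * σ b)} := by
    ext x
    rw [Set.mem_ofPred_eq, mem_scalarSet_iff hσ hθ, Set.mem_preimage, Set.mem_ofPred_eq,
      pow_succ (twist σ α θ (x + a)), ← hσ, map_twist_mul_twist hσσ hα hαθ,
      mul_right_inj' hα0, map_sub]
    constructor <;> intro h <;> linear_combination h
  rw [hset, Set.ncard_preimage_of_injective_subset_range hinj']
  exact fun w _ => Finite.injective_iff_surjective.1 hinj' w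

open Classical in
lemma ncard_shift_sq_sub_mem_scalarSet (hK : Fintype.card K = q ^ 2) (hq : Odd q)
    (hσ : ∀ x, σ x = x ^ q) (hθ : θ ≠ 0) (hns : ¬ ∃ s : K, s ^ q = s ∧ s ^ 2 = θ ^ (q + 1))
    (a b : K) :
    {x : K | (x + a) ^ 2 - b ∈ scalarSet K q θ}.ncard =
      if b ∈ scalarSet K q θ then 1 else q + 1 := by
  have h2 : (2 : K) ≠ 0 := Ring.two_ne_zero <| by
    rw [Ne, FiniteField.even_card_iff_char_two, hK, Nat.odd_iff.1 hq.pow]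
    decide
  obtain ⟨α, hα, hαθ⟩ := exists_map_eq_neg_and_sq_eq hK hq hσ hns
  have hα0 : α ≠ 0 := ne_zero_pow two_ne_zero (hαθ ▸ mul_ne_zero hθ ((map_ne_zero σ).2 hθ))
  rw [ncard_shift_sq_sub_mem_scalarSet_eq hK hσ hθ h2 hα0 hα hαθ, mem_scalarSet_iff hσ hθ]
  split_ifs with hb
  · simp [hb]
  · refine ncard_pow_succ_eq hK ?_ (mul_ne_zero hα0 (sub_ne_zero.2 hb))
    simp only [← hσ, map_mul, map_sub, map_map_eq_self hK hσ, hα]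
    ring

end Frobenius

section ShiftPlane

variable {K : Type} [Field K] {q : ℕ} {θ : K}

lemma ncard_affLine_inter_unitalSet (f : K → K) (a b : K) :
    (affLine K f a b ∩ unitalSet K q θ).ncard = {x | f (x + a) - b ∈ scalarSet K q θ}.ncard := by
  have hset : affLine K f a b ∩ unitalSet K q θ =
      (fun x => (Sum.inl (x, f (x + a) - b) : ShiftPt K)) ''
        {x | f (x + a) - b ∈ scalarSet K q θ} := by
    ext P
    simp only [affLine, unitalSet, scalarSet, Set.mem_inter_iff, Set.mem_ofPred_eq,
      Set.mem_image]
    constructor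
    · rintro ⟨⟨x, rfl⟩ | rfl, ⟨x', t, ht, h⟩ | h⟩
      · exact ⟨x, ⟨t, ht, (Prod.ext_iff.1 (Sum.inl_injective h)).2⟩, rfl⟩
      all_goals simp at h
    · rintro ⟨x, ⟨t, ht, h⟩, rfl⟩
      exact ⟨Or.inl ⟨x, rfl⟩, Or.inl ⟨x, t, ht, by rw [h]⟩⟩
  rw [hset, Set.ncard_image_of_injective _ fun x y h => (Prod.ext_iff.1 (Sum.inl_injective h)).1]

lemma ncard_vertLine_inter_unitalSet [Finite K] (hθ : θ ≠ 0) (a : K) :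
    (vertLine K a ∩ unitalSet K q θ).ncard = {t : K | t ^ q = t}.ncard + 1 := by
  have hset : vertLine K a ∩ unitalSet K q θ = insert (Sum.inr (Sum.inr ()))
      ((fun t => (Sum.inl (a, t * θ) : ShiftPt K)) '' {t | t ^ q = t}) := by
    ext P
    simp only [vertLine, unitalSet, Set.mem_inter_iff, Set.mem_ofPred_eq, Set.mem_insert_iff,
      Set.mem_image]
    constructor
    · rintro ⟨⟨y, rfl⟩ | rfl, ⟨x', t, ht, h⟩ | h⟩ <;> simp_all
    · rintro (rfl | ⟨t, ht, rfl⟩)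
      · exact ⟨Or.inr rfl, Or.inr rfl⟩
      · exact ⟨Or.inl ⟨_, rfl⟩, Or.inl ⟨a, t, ht, rfl⟩⟩
  have hinj : Function.Injective fun t => (Sum.inl (a, t * θ) : ShiftPt K) := fun t t' h =>
    mul_right_cancel₀ hθ (Prod.ext_iff.1 (Sum.inl_injective h)).2
  rw [hset, Set.ncard_insert_of_notMem (by simp) (Set.toFinite _),
    Set.ncard_image_of_injective _ hinj]

lemma lineAtInf_inter_unitalSet :
    lineAtInf K ∩ unitalSet K q θ = {Sum.inr (Sum.inr ())} := by
  ext P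
  simp only [lineAtInf, unitalSet, Set.mem_inter_iff, Set.mem_ofPred_eq,
    Set.mem_singleton_iff]
  constructor
  · rintro ⟨⟨s, rfl⟩, ⟨x, t, ht, h⟩ | h⟩ <;> simp_all
  · rintro rfl
    exact ⟨⟨_, rfl⟩, Or.inr rfl⟩

end ShiftPlane

theorem stmt3_general (p n q : ℕ) (hp : Nat.Prime p) (hpodd : Odd p) (hq : q = p ^ n)
    (K : Type) [Field K] [Fintype K] (hcard : Fintype.card K = q ^ 2)
    (θ : K) (hθ : θ ≠ 0)
    (hns : ¬ ∃ s : K, s ^ q = s ∧ s ^ 2 = θ ^ (q + 1)) :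
    (∀ a b : K,
      (b ∈ scalarSet K q θ →
        {x : K | (x + a) ^ 2 - b ∈ scalarSet K q θ}.ncard = 1) ∧
      (b ∉ scalarSet K q θ →
        {x : K | (x + a) ^ 2 - b ∈ scalarSet K q θ}.ncard = q + 1)) ∧
    (∀ L ∈ shiftLines K (fun x : K => x ^ 2),
      (L ∩ unitalSet K q θ).ncard = 1 ∨ (L ∩ unitalSet K q θ).ncard = q + 1) := by
  have : Fact p.Prime := ⟨hp⟩
  have : CharP K p := charP_of_card_eq_prime_pow (f := n * 2) (by rw [hcard, hq, pow_mul])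
  have hcount := ncard_shift_sq_sub_mem_scalarSet hcard (hq ▸ hpodd.pow)
    (σ := iterateFrobenius K p n) (fun x => by rw [iterateFrobenius_def, hq]) hθ hns
  refine ⟨fun a b => ⟨fun hb => by simp [hcount, hb], fun hb => by simp [hcount, hb]⟩, ?_⟩
  rintro L (⟨a, b, rfl⟩ | ⟨a, rfl⟩ | rfl)
  · rw [ncard_affLine_inter_unitalSet, hcount]
    split_ifs <;> simp
  · exact Or.inr (by rw [ncard_vertLine_inter_unitalSet hθ, ncard_pow_eq_self hcard])
  · exact Or.inl (by rw [lineAtInf_inter_unitalSet, Set.ncard_singleton])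

/-- Theorem 2.4 (a).  For `f(x) = x²` on `K = F_{q²}` (`q` odd) and
`θ ≠ 0` with `θ^{q+1}` a nonsquare in the subfield `F` of order `q`, the number of
`x` with `(x+a)² − b ∈ θF` is `1` if `b ∈ θF` and `q+1` otherwise; hence `U_θ` is
a unital in the Desarguesian shift plane `Π(x²)`. -/
theorem stmt3 (p n q : ℕ) (hp : Nat.Prime p) (hpodd : Odd p) (hn : 0 < n) (hq : q = p ^ n)
    (K : Type) [Field K] [Fintype K] (hcard : Fintype.card K = q ^ 2)
    (θ : K) (hθ : θ ≠ 0)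
    (hns : ¬ ∃ s : K, s ^ q = s ∧ s ^ 2 = θ ^ (q + 1)) :
    (∀ a b : K,
      (b ∈ scalarSet K q θ →
        {x : K | (x + a) ^ 2 - b ∈ scalarSet K q θ}.ncard = 1) ∧
      (b ∉ scalarSet K q θ →
        {x : K | (x + a) ^ 2 - b ∈ scalarSet K q θ}.ncard = q + 1)) ∧
    (∀ L ∈ shiftLines K (fun x : K => x ^ 2),
      (L ∩ unitalSet K q θ).ncard = 1 ∨ (L ∩ unitalSet K q θ).ncard = q + 1) :=
  stmt3_general p n q hp hpodd hq K hcard θ hθ hns
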